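/- Let (e_1,…,e_s) be a T-chain and let δ be the first entry of a discrepancy vector for (e_1,…,e_s). Then the T-chain (e_1+1, e_2,…,e_s, 2) admits a discrepancy vector whose first entry is −1/(δ+2), and the T-chain (2, e_1,…,e_{s−1}, e_s+1) admits a discrepancy vector whose first entry is δ/(1−δ). -/

import Mathlib

/-- Hirzebruch–Jung continued fraction: `hjcf [b₁,…,b_r] = b₁ - 1/(b₂ - 1/(⋯ - 1/b_r))`.
(With the convention `hjcf [] = 0`, so that `hjcf [b] = b` since `1/0 = 0`.) -/
def hjcf : List ℚ → ℚ
  | [] => 0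
  | b :: l => b - 1 / hjcf l

/-- Hirzebruch–Jung continued fraction of a list of integers. -/
def hjcfZ (b : List ℤ) : ℚ := hjcf (b.map (fun x => (x : ℚ)))

/-- `b` is a T-chain. -/
def IsTChain (b : List ℤ) : Prop :=
  (∀ x ∈ b, 2 ≤ x) ∧
    ∃ d n a : ℤ, 1 ≤ d ∧ 0 < a ∧ a < n ∧ Int.gcd a n = 1 ∧
      hjcfZ b = ((d * n ^ 2 : ℤ) : ℚ) / ((d * n * a - 1 : ℤ) : ℚ)

/-- `δ` is a discrepancy vector for the chain `b`. -/
def IsDiscrepancyVector (b : List ℤ) (δ : List ℚ) : Prop :=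
  δ.length = b.length ∧
    ∀ i < b.length,
      -((b.getD i 0 : ℚ)) * δ.getD i 0
          + (if i = 0 then 0 else δ.getD (i - 1) 0) + δ.getD (i + 1) 0
        = (b.getD i 0 : ℚ) - 2

/-- The operation `(e₁,…,e_s) ↦ (e₁+1, e₂,…,e_s, 2)`. -/
def addLeft (b : List ℤ) : List ℤ := b.modifyHead (· + 1) ++ [2]

/-- The operation `(e₁,…,e_s) ↦ (2, e₁,…,e_{s-1}, e_s+1)`. -/
def addRight (b : List ℤ) : List ℤ := 2 :: (b.reverse.modifyHead (· + 1)).reverse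

/-!
Put `X₀ = 1`, `Xᵢ = 1 + δᵢ`, `X_{s+1} = 1`; the adjunction equations become
`Xᵢ₋₁ - eᵢ Xᵢ + Xᵢ₊₁ = 0`. The product `T` of the matrices `!![eᵢ, -1; 1, 0]` has determinant
`1`, its first column `(N, M)` satisfies `[e₁,…,e_s] = N / M`, and it maps `(X_s, X_{s+1})` to
`(X₀, X₁)`. Hence `N X₁ = M + 1` and `N X_s = P + 1`, where `P = -T₀₁` is the inverse of `M`
modulo `N`. For a T-chain `N = dn²` and `M = dna - 1`, so `P = dn(n - a) - 1`, `M + P + 2 = N`,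
and therefore `δ₁ + δ_s = -1`. This relation is exactly what makes the rescaled vectors
`(X₁, …, X_s, 1) / (δ₁ + 2)` and `(1, X₁, …, X_s) / (1 - δ₁)` solve the equations of the two
extended chains.
-/

def IsChainSolution (b : List ℤ) (X : ℕ → ℚ) : Prop :=
  ∀ i < b.length, X i - b.getD i 0 * X (i + 1) + X (i + 2) = 0

theorem isChainSolution_cons {x : ℤ} {l : List ℤ} {X : ℕ → ℚ} :
    IsChainSolution (x :: l) X ↔
      X 0 - x * X 1 + X 2 = 0 ∧ IsChainSolution l fun i => X (i + 1) := by
  simp only [IsChainSolution, List.length_cons, Nat.forall_lt_succ_left, List.getD_cons_zero,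
    List.getD_cons_succ]

theorem isChainSolution_append_singleton {l : List ℤ} {x : ℤ} {X : ℕ → ℚ} :
    IsChainSolution (l ++ [x]) X ↔
      IsChainSolution l X ∧ X l.length - x * X (l.length + 1) + X (l.length + 2) = 0 := by
  simp only [IsChainSolution, List.length_append, List.length_singleton, Nat.forall_lt_succ_right]
  refine and_congr (forall₂_congr fun i hi => ?_) ?_
  · rw [List.getD_append _ _ _ _ hi]
  · rw [List.getD_append_right _ _ _ _ le_rfl]
    simp

theorem IsChainSolution.congr {b : List ℤ} {X Y : ℕ → ℚ} (hX : IsChainSolution b X)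
    (hXY : ∀ i ≤ b.length + 1, X i = Y i) : IsChainSolution b Y := by
  intro i hi
  rw [← hXY i (by omega), ← hXY (i + 1) (by omega), ← hXY (i + 2) (by omega)]
  exact hX i hi

theorem IsChainSolution.const_mul {b : List ℤ} {X : ℕ → ℚ} (hX : IsChainSolution b X) (c : ℚ) :
    IsChainSolution b fun i => c * X i := by
  intro i hi
  linear_combination c * hX i hi

/-- `logDisc δ i = 1 + δᵢ₋₁` is the log discrepancy of the `i`-th curve, counted from `1`;
the two boundary positions `0` and `δ.length + 1` get the value `1`. -/
def logDisc (δ : List ℚ) (i : ℕ) : ℚ := (0 :: δ).getD i 0 + 1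

@[simp]
theorem logDisc_zero (δ : List ℚ) : logDisc δ 0 = 1 := by simp [logDisc]

@[simp]
theorem logDisc_succ (δ : List ℚ) (i : ℕ) : logDisc δ (i + 1) = δ.getD i 0 + 1 := rfl

theorem isDiscrepancyVector_iff {b : List ℤ} {δ : List ℚ} :
    IsDiscrepancyVector b δ ↔ δ.length = b.length ∧ IsChainSolution b (logDisc δ) := by
  refine and_congr Iff.rfl (forall₂_congr fun i _ => ?_)
  cases i <;> simp only [logDisc_zero, logDisc_succ, if_true, if_false, Nat.add_one_sub_one,
    Nat.succ_ne_zero] <;> constructor <;> intro h <;> linarith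

def ofLogDisc (X : ℕ → ℚ) (n : ℕ) : List ℚ := List.ofFn fun i : Fin n => X (i + 1) - 1

theorem ofLogDisc_getD_zero {X : ℕ → ℚ} {n : ℕ} (hn : 0 < n) :
    (ofLogDisc X n).getD 0 0 = X 1 - 1 := by
  simp [ofLogDisc, List.getD_eq_getElem?_getD, hn]

theorem logDisc_ofLogDisc {X : ℕ → ℚ} {n : ℕ} (h0 : X 0 = 1) (hn : X (n + 1) = 1) :
    ∀ i ≤ n + 1, logDisc (ofLogDisc X n) i = X i := by
  rintro (_ | i) hi
  · simp [h0]
  · rcases (Nat.lt_succ_iff.1 hi).lt_or_eq with hi | rfl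
    · simp [ofLogDisc, List.getD_eq_getElem?_getD, hi]
    · simp [ofLogDisc, List.getD_eq_getElem?_getD, hn]

theorem isDiscrepancyVector_ofLogDisc {b : List ℤ} {X : ℕ → ℚ} (hX : IsChainSolution b X)
    (h0 : X 0 = 1) (hr : X (b.length + 1) = 1) :
    IsDiscrepancyVector b (ofLogDisc X b.length) :=
  isDiscrepancyVector_iff.2
    ⟨by simp [ofLogDisc], hX.congr fun i hi => (logDisc_ofLogDisc h0 hr i hi).symm⟩

theorem IsDiscrepancyVector.logDisc_length_add_one {b : List ℤ} {δ : List ℚ}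
    (h : IsDiscrepancyVector b δ) : logDisc δ (b.length + 1) = 1 := by
  rw [logDisc_succ, List.getD_eq_default _ _ h.1.le, zero_add]

theorem IsDiscrepancyVector.exists_addLeft {b : List ℤ} {δ : List ℚ}
    (h : IsDiscrepancyVector b δ) (hb : b ≠ [])
    (hsum : δ.getD 0 0 + δ.getD (b.length - 1) 0 = -1) (hne : δ.getD 0 0 + 2 ≠ 0) :
    ∃ δ' : List ℚ, IsDiscrepancyVector (addLeft b) δ' ∧ δ'.getD 0 0 = -1 / (δ.getD 0 0 + 2) := by
  obtain ⟨x, l, rfl⟩ := List.exists_cons_of_ne_nil hb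
  have hXend := h.logDisc_length_add_one
  obtain ⟨hX0, hXl⟩ := isChainSolution_cons.1 (isDiscrepancyVector_iff.1 h).2
  have hXsum : logDisc δ 1 + logDisc δ (l.length + 1) = 1 := by
    simp only [List.length_cons, Nat.add_one_sub_one] at hsum
    rw [logDisc_succ, logDisc_succ]
    linarith
  rw [show δ.getD 0 0 + 2 = logDisc δ 1 + 1 by rw [logDisc_succ]; ring] at hne ⊢
  rw [logDisc_zero] at hX0
  rw [List.length_cons] at hXend
  generalize logDisc δ = X at *
  set c := X 1 + 1
  set Y : ℕ → ℚ := fun i => if i = 0 ∨ l.length + 3 ≤ i then 1 else X i / c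
  have hY0 : Y 0 = 1 := by simp [Y]
  have hYend : Y (l.length + 3) = 1 := by simp [Y]
  have hYmid : ∀ i, 1 ≤ i → i ≤ l.length + 2 → Y i = X i / c := fun i h1 h2 => by
    simp only [Y, if_neg (show ¬(i = 0 ∨ l.length + 3 ≤ i) by omega)]
  have hY : IsChainSolution (addLeft (x :: l)) Y := by
    rw [show addLeft (x :: l) = (x + 1) :: (l ++ [2]) from rfl, isChainSolution_cons,
      isChainSolution_append_singleton]
    refine ⟨?_, (hXl.const_mul c⁻¹).congr fun i hi => ?_, ?_⟩
    · rw [hY0, hYmid 1 le_rfl (by omega), hYmid 2 (by omega) (by omega)]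
      field_simp
      push_cast
      linear_combination hX0
    · rw [hYmid (i + 1) (by omega) (by omega), div_eq_inv_mul]
    · rw [hYmid (l.length + 1) (by omega) (by omega), hYmid (l.length + 2) (by omega) le_rfl,
        hYend, hXend]
      field_simp
      linear_combination hXsum
  refine ⟨ofLogDisc Y (addLeft (x :: l)).length, isDiscrepancyVector_ofLogDisc hY hY0 ?_, ?_⟩
  · simpa [addLeft] using hYend
  · rw [ofLogDisc_getD_zero (by simp [addLeft]), hYmid 1 le_rfl (by omega)]
    field_simp
    ring

theorem IsDiscrepancyVector.exists_addRight {b : List ℤ} {δ : List ℚ}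
    (h : IsDiscrepancyVector b δ) (hb : b ≠ [])
    (hsum : δ.getD 0 0 + δ.getD (b.length - 1) 0 = -1) (hne : 1 - δ.getD 0 0 ≠ 0) :
    ∃ δ' : List ℚ, IsDiscrepancyVector (addRight b) δ' ∧
      δ'.getD 0 0 = δ.getD 0 0 / (1 - δ.getD 0 0) := by
  obtain ⟨l, x, rfl⟩ := (List.eq_nil_or_concat' b).resolve_left hb
  have hXend := h.logDisc_length_add_one
  obtain ⟨hXl, hXlast⟩ := isChainSolution_append_singleton.1 (isDiscrepancyVector_iff.1 h).2
  have hXsum : logDisc δ 1 + logDisc δ (l.length + 1) = 1 := by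
    simp only [List.length_append, List.length_singleton, Nat.add_one_sub_one] at hsum
    rw [logDisc_succ, logDisc_succ]
    linarith
  rw [show 1 - δ.getD 0 0 = 2 - logDisc δ 1 by rw [logDisc_succ]; ring] at hne ⊢
  rw [show δ.getD 0 0 = logDisc δ 1 - 1 by rw [logDisc_succ]; ring]
  rw [List.length_append, List.length_singleton] at hXend
  have hX0 := logDisc_zero δ
  generalize logDisc δ = X at *
  set c := 2 - X 1
  set Y : ℕ → ℚ := fun i => if i = 0 ∨ l.length + 3 ≤ i then 1 else X (i - 1) / c
  have hY0 : Y 0 = 1 := by simp [Y]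
  have hYend : Y (l.length + 3) = 1 := by simp [Y]
  have hYmid : ∀ i ≤ l.length + 1, Y (i + 1) = X i / c := fun i hi => by
    simp only [Y, if_neg (show ¬(i + 1 = 0 ∨ l.length + 3 ≤ i + 1) by omega), Nat.add_one_sub_one]
  have hY : IsChainSolution (addRight (l ++ [x])) Y := by
    rw [show addRight (l ++ [x]) = 2 :: (l ++ [x + 1]) by simp [addRight], isChainSolution_cons,
      isChainSolution_append_singleton]
    refine ⟨?_, (hXl.const_mul c⁻¹).congr fun i hi => ?_, ?_⟩
    · rw [hY0, hYmid 0 (by omega), hYmid 1 (by omega), hX0]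
      field_simp
      ring
    · rw [hYmid i hi, div_eq_inv_mul]
    · rw [hYmid l.length (by omega), hYmid (l.length + 1) le_rfl, hYend]
      rw [hXend] at hXlast
      field_simp
      push_cast
      linear_combination hXlast - hXsum
  refine ⟨ofLogDisc Y (addRight (l ++ [x])).length, isDiscrepancyVector_ofLogDisc hY hY0 ?_, ?_⟩
  · simpa [addRight] using hYend
  · rw [ofLogDisc_getD_zero (by simp [addRight]), hYmid 0 (by omega), hX0]
    field_simp
    ring

def transferMatrix (b : List ℤ) : Matrix (Fin 2) (Fin 2) ℤ :=
  (b.map fun x => !![x, -1; 1, 0]).prod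

@[simp]
theorem transferMatrix_nil : transferMatrix [] = 1 := rfl

theorem transferMatrix_cons (x : ℤ) (l : List ℤ) :
    transferMatrix (x :: l) = !![x, -1; 1, 0] * transferMatrix l := rfl

@[simp]
theorem transferMatrix_cons_apply (x : ℤ) (l : List ℤ) :
    transferMatrix (x :: l) 0 0 = x * transferMatrix l 0 0 - transferMatrix l 1 0 ∧
    transferMatrix (x :: l) 0 1 = x * transferMatrix l 0 1 - transferMatrix l 1 1 ∧
    transferMatrix (x :: l) 1 0 = transferMatrix l 0 0 ∧
    transferMatrix (x :: l) 1 1 = transferMatrix l 0 1 := by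
  simp [transferMatrix_cons, Matrix.mul_apply, Fin.sum_univ_two, sub_eq_add_neg]

theorem det_transferMatrix (b : List ℤ) : (transferMatrix b).det = 1 := by
  induction b with
  | nil => simp
  | cons x l ih => rw [transferMatrix_cons, Matrix.det_mul, Matrix.det_fin_two_of, ih]; ring

theorem le_transferMatrix_mul_add_mul {b : List ℤ} (hb : ∀ x ∈ b, 2 ≤ x) {p q : ℤ} (hqp : q ≤ p)
    (hp : 0 ≤ p) :
    p ≤ transferMatrix b 0 0 * p + transferMatrix b 0 1 * q ∧
      p - q ≤ (transferMatrix b 0 0 * p + transferMatrix b 0 1 * q) -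
        (transferMatrix b 1 0 * p + transferMatrix b 1 1 * q) := by
  induction b with
  | nil => simp
  | cons x l ih =>
    obtain ⟨h0, h1⟩ := ih fun y hy => hb y (List.mem_cons_of_mem x hy)
    have hx : 0 ≤ (x - 2) * (transferMatrix l 0 0 * p + transferMatrix l 0 1 * q) :=
      mul_nonneg (by linarith [hb x List.mem_cons_self]) (by linarith)
    simp only [transferMatrix_cons_apply]
    constructor <;> linarith

theorem hjcfZ_eq_transferMatrix {b : List ℤ} (hb : ∀ x ∈ b, 2 ≤ x) :
    hjcfZ b = transferMatrix b 0 0 / transferMatrix b 1 0 := by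
  induction b with
  | nil => simp [hjcfZ, hjcf]
  | cons x l ih =>
    have hl : ∀ y ∈ l, 2 ≤ y := fun y hy => hb y (List.mem_cons_of_mem x hy)
    have hpos : (0 : ℚ) < transferMatrix l 0 0 := by
      have := (le_transferMatrix_mul_add_mul hl zero_le_one zero_le_one).1
      simp only [mul_one, mul_zero, add_zero] at this
      exact_mod_cast this
    have hcons : hjcfZ (x :: l) = x - 1 / hjcfZ l := rfl
    rw [hcons, ih hl]
    simp only [transferMatrix_cons_apply]
    field_simp
    push_cast
    ring

theorem IsChainSolution.eq_transferMatrix {b : List ℤ} {X : ℕ → ℚ} (hX : IsChainSolution b X) :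
    X 0 = transferMatrix b 0 0 * X b.length + transferMatrix b 0 1 * X (b.length + 1) ∧
      X 1 = transferMatrix b 1 0 * X b.length + transferMatrix b 1 1 * X (b.length + 1) := by
  induction b generalizing X with
  | nil => simp
  | cons x l ih =>
    obtain ⟨h0, hl⟩ := isChainSolution_cons.1 hX
    obtain ⟨ih0, ih1⟩ := ih hl
    simp only [transferMatrix_cons_apply, List.length_cons]
    push_cast
    constructor
    · linear_combination h0 + x * ih0 - ih1
    · exact ih0

theorem IsChainSolution.transferMatrix_mul_eq {b : List ℤ} {X : ℕ → ℚ}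
    (hX : IsChainSolution b X) (h0 : X 0 = 1) (hr : X (b.length + 1) = 1) :
    transferMatrix b 0 0 * X 1 = transferMatrix b 1 0 + 1 ∧
      transferMatrix b 0 0 * X b.length = 1 - transferMatrix b 0 1 := by
  obtain ⟨e0, e1⟩ := hX.eq_transferMatrix
  have hdet : (transferMatrix b 0 0 * transferMatrix b 1 1 - transferMatrix b 0 1 *
      transferMatrix b 1 0 : ℚ) = 1 := by
    exact_mod_cast (Matrix.det_fin_two _).symm.trans (det_transferMatrix b)
  rw [h0, hr] at e0
  rw [hr] at e1
  constructor
  · linear_combination transferMatrix b 0 0 * e1 - transferMatrix b 1 0 * e0 + hdet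
  · linear_combination -e0

theorem eq_of_mul_modEq_one {N M P P' : ℤ} (h : M * P ≡ 1 [ZMOD N]) (h' : M * P' ≡ 1 [ZMOD N])
    (hP : 0 ≤ P) (hPN : P < N) (hP' : 0 ≤ P') (hP'N : P' < N) : P = P' := by
  have hmod : P ≡ P' [ZMOD N] :=
    calc P = P * 1 := (mul_one P).symm
      _ ≡ P * (M * P') [ZMOD N] := h'.symm.mul_left P
      _ = M * P * P' := by ring
      _ ≡ 1 * P' [ZMOD N] := h.mul_right P'
      _ = P' := one_mul P'
  rwa [Int.ModEq, Int.emod_eq_of_lt hP hPN, Int.emod_eq_of_lt hP' hP'N] at hmod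

theorem IsTChain.transferMatrix_entries {e : List ℤ} (hT : IsTChain e) :
    0 ≤ transferMatrix e 1 0 ∧ 0 ≤ -transferMatrix e 0 1 ∧
      transferMatrix e 1 0 - transferMatrix e 0 1 + 2 = transferMatrix e 0 0 := by
  obtain ⟨h2, d, n, a, hd, ha, han, -, hval⟩ := hT
  have hdet := (Matrix.det_fin_two _).symm.trans (det_transferMatrix e)
  have hN := (le_transferMatrix_mul_add_mul h2 zero_le_one zero_le_one).1
  have hP := (le_transferMatrix_mul_add_mul h2 (neg_one_lt_zero).le le_rfl).1
  have hPN := (le_transferMatrix_mul_add_mul h2 le_rfl zero_le_one).1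
  simp only [mul_one, mul_zero, add_zero, zero_add, mul_neg] at hN hP hPN
  rw [hjcfZ_eq_transferMatrix h2] at hval
  set N := transferMatrix e 0 0
  set M := transferMatrix e 1 0
  set P := -transferMatrix e 0 1
  have hdn : 2 ≤ d * n := by nlinarith
  have hden : 0 < d * n * a - 1 := by nlinarith
  have hM : 0 < M := by
    have hpos : (0 : ℚ) < ((d * n ^ 2 : ℤ) : ℚ) / ((d * n * a - 1 : ℤ) : ℚ) :=
      div_pos (by exact_mod_cast (by nlinarith : 0 < d * n ^ 2)) (by exact_mod_cast hden)
    rw [← hval, div_pos_iff_of_pos_left (by exact_mod_cast hN.trans_lt' zero_lt_one)] at hpos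
    exact_mod_cast hpos
  have hcopNM : IsCoprime N M := ⟨transferMatrix e 1 1, P, by linear_combination hdet⟩
  have hcop : IsCoprime (d * n ^ 2) (d * n * a - 1) := ⟨d * a ^ 2, -(d * n * a + 1), by ring⟩
  obtain ⟨hNeq, hMeq⟩ := Rat.div_int_inj hM hden (Int.isCoprime_iff_gcd_eq_one.1 hcopNM)
    (Int.isCoprime_iff_gcd_eq_one.1 hcop) hval
  have hPeq : P = d * n * (n - a) - 1 := by
    refine eq_of_mul_modEq_one (N := N) (M := M) ?_ ?_ hP (by linarith) (by nlinarith)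
      (by nlinarith)
    · exact (Int.modEq_iff_dvd.2 ⟨-transferMatrix e 1 1, by linear_combination hdet⟩).symm
    · exact (Int.modEq_iff_dvd.2 ⟨d * a * (n - a) - 1, by rw [hNeq, hMeq]; ring⟩).symm
  have hPeq' : -transferMatrix e 0 1 = d * n * (n - a) - 1 := hPeq
  exact ⟨hM.le, hP, by linear_combination hMeq + hPeq' - hNeq⟩

theorem IsTChain.ne_nil {e : List ℤ} (hT : IsTChain e) : e ≠ [] := by
  rintro rfl
  simpa using hT.transferMatrix_entries.2.2

theorem IsTChain.discrepancy_head_add_last {e : List ℤ} {δ : List ℚ} (hT : IsTChain e)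
    (hδ : IsDiscrepancyVector e δ) :
    δ.getD 0 0 + δ.getD (e.length - 1) 0 = -1 ∧ -1 < δ.getD 0 0 ∧ δ.getD 0 0 < 0 := by
  obtain ⟨hM, hP, hNMP⟩ := hT.transferMatrix_entries
  obtain ⟨hfirst, hlast⟩ := (isDiscrepancyVector_iff.1 hδ).2.transferMatrix_mul_eq
    (logDisc_zero δ) hδ.logDisc_length_add_one
  obtain ⟨r, hr⟩ := Nat.exists_eq_add_one.2 (List.length_pos_iff.2 hT.ne_nil)
  rw [hr, logDisc_succ] at hlast
  rw [logDisc_succ] at hfirst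
  rw [hr, Nat.add_sub_cancel]
  set N := transferMatrix e 0 0
  have hN : (0 : ℚ) < N := by exact_mod_cast (by linarith : 0 < N)
  have hMq : (0 : ℚ) ≤ transferMatrix e 1 0 := by exact_mod_cast hM
  have hPq : (0 : ℚ) ≤ -transferMatrix e 0 1 := by exact_mod_cast hP
  have hNMPq : (transferMatrix e 1 0 - transferMatrix e 0 1 + 2 : ℚ) = N := by exact_mod_cast hNMP
  have hsum : N * (δ.getD 0 0 + δ.getD r 0 + 1) = 0 := by
    linear_combination hfirst + hlast + hNMPq
  refine ⟨by linarith [(mul_eq_zero.1 hsum).resolve_left hN.ne'], by nlinarith, by nlinarith⟩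

theorem stmt7 (e : List ℤ) (hT : IsTChain e)
    (δvec : List ℚ) (hδ : IsDiscrepancyVector e δvec)
    (δ : ℚ) (hhead : δvec.getD 0 0 = δ) :
    (∃ δ' : List ℚ, IsDiscrepancyVector (addLeft e) δ' ∧
        δ'.getD 0 0 = -1 / (δ + 2)) ∧
      (∃ δ'' : List ℚ, IsDiscrepancyVector (addRight e) δ'' ∧
        δ''.getD 0 0 = δ / (1 - δ)) := by
  obtain ⟨hsum, hgt, hlt⟩ := hT.discrepancy_head_add_last hδ
  subst hhead
  exact ⟨hδ.exists_addLeft hT.ne_nil hsum (by linarith),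
    hδ.exists_addRight hT.ne_nil hsum (by linarith)⟩
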